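/- Let $H$ be a Hilbert space, $S \subseteq H$ a closed subspace, $P$ the orthogonal projection onto $S$. Let $a : H \to H$ be a bounded self-adjoint positive operator with $\|a - I\| \le \eta < 1$. Define the weighted projection $P_a : H \to S$ by $\langle a P_a f, s\rangle = \langle a f, s\rangle$ for all $s \in S$. Then $P_a$ is well-defined, and for all $f \in H$, $\|P_a f - P f\| \le \frac{2\eta}{1-\eta}\|f\|$. -/

import Mathlib

/-!
Since `‖a - 1‖ ≤ η < 1`, the form `⟪a u, v⟫` is coercive with constant `1 - η`, so by
Lax–Milgram on `S` the weighted projection exists and is unique. For the error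
`e = P_a f - P f ∈ S`, Galerkin orthogonality and `⟪f - P f, e⟫ = 0` give
`⟪a e, e⟫ = ⟪(a - 1)(f - P f), e⟫ ≤ η ‖f‖ ‖e‖`, and coercivity turns this into
`‖e‖ ≤ η / (1 - η) ‖f‖`.
-/

open scoped InnerProductSpace

section WeightedProjection

variable {H : Type*} [NormedAddCommGroup H] [InnerProductSpace ℝ H]
  {a : H →L[ℝ] H} {η : ℝ}

noncomputable def weightedInnerForm (a : H →L[ℝ] H) (S : Submodule ℝ H) : S →L[ℝ] S →L[ℝ] ℝ :=
  ((innerSL ℝ).comp a).bilinearComp S.subtypeL S.subtypeL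

@[simp]
lemma weightedInnerForm_apply (S : Submodule ℝ H) (u v : S) :
    weightedInnerForm a S u v = ⟪a u, v⟫_ℝ :=
  rfl

/-- `g = P_a f`. -/
def IsWeightedProjection (a : H →L[ℝ] H) (S : Submodule ℝ H) (f g : H) : Prop :=
  g ∈ S ∧ ∀ s ∈ S, ⟪a g, s⟫_ℝ = ⟪a f, s⟫_ℝ

lemma mul_norm_mul_norm_le_inner_apply_self (ha : ‖a - 1‖ ≤ η) (v : H) :
    (1 - η) * ‖v‖ * ‖v‖ ≤ ⟪a v, v⟫_ℝ := by
  have hsplit : ⟪a v, v⟫_ℝ = ‖v‖ * ‖v‖ + ⟪(a - 1) v, v⟫_ℝ := by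
    simp only [sub_apply, one_apply_eq_self, inner_sub_left, real_inner_self_eq_norm_mul_norm]
    ring
  have hpert : -(η * ‖v‖ * ‖v‖) ≤ ⟪(a - 1) v, v⟫_ℝ :=
    calc -(η * ‖v‖ * ‖v‖) ≤ -(‖(a - 1) v‖ * ‖v‖) := by
          gcongr; exact (a - 1).le_of_opNorm_le ha v
      _ ≤ ⟪(a - 1) v, v⟫_ℝ := neg_le_of_abs_le (abs_real_inner_le_norm _ _)
  linarith

lemma isCoercive_weightedInnerForm (ha : ‖a - 1‖ ≤ η) (hη1 : η < 1) (S : Submodule ℝ H) :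
    IsCoercive (weightedInnerForm a S) :=
  ⟨1 - η, sub_pos.mpr hη1, fun u => mul_norm_mul_norm_le_inner_apply_self ha (u : H)⟩

lemma norm_sub_starProjection_le_norm (S : Submodule ℝ H) [S.HasOrthogonalProjection] (f : H) :
    ‖f - S.starProjection f‖ ≤ ‖f‖ := by
  simpa using Sᗮ.norm_starProjection_apply_le f

variable {S : Submodule ℝ H}

lemma exists_isWeightedProjection [CompleteSpace S] (hB : IsCoercive (weightedInnerForm a S))
    (f : H) : ∃ g, IsWeightedProjection a S f g := by
  -- Lax–Milgram, with the right-hand side `s ↦ ⟪a f, s⟫` represented by `P (a f) ∈ S`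
  set g := hB.continuousLinearEquivOfBilin.symm (S.orthogonalProjectionOnto (a f))
  refine ⟨g, g.2, fun s hs => ?_⟩
  have hLM := hB.continuousLinearEquivOfBilin_apply g ⟨s, hs⟩
  rw [ContinuousLinearEquiv.apply_symm_apply,
    Submodule.inner_orthogonalProjectionOnto_eq_of_mem_right, weightedInnerForm_apply] at hLM
  exact hLM.symm

lemma IsWeightedProjection.unique (hB : IsCoercive (weightedInnerForm a S)) {f g g' : H}
    (hg : IsWeightedProjection a S f g) (hg' : IsWeightedProjection a S f g') : g' = g := by
  obtain ⟨C, hC, hcoer⟩ := hB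
  set d : S := ⟨g' - g, S.sub_mem hg'.1 hg.1⟩
  have hd : ⟪a d, d⟫_ℝ = 0 := by
    simp only [d, map_sub, inner_sub_left, hg.2 _ d.2, hg'.2 _ d.2, sub_self]
  have hnorm : C * ‖d‖ * ‖d‖ ≤ 0 := hd ▸ hcoer d
  have hd0 : d = 0 := by
    by_contra hne
    have hpos := norm_pos_iff.mpr hne
    nlinarith [mul_pos (mul_pos hC hpos) hpos]
  exact sub_eq_zero.mp (congrArg Subtype.val hd0)

lemma IsWeightedProjection.norm_sub_starProjection_le [S.HasOrthogonalProjection]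
    (ha : ‖a - 1‖ ≤ η) (hη1 : η < 1) {f g : H} (hg : IsWeightedProjection a S f g) :
    ‖g - S.starProjection f‖ ≤ η / (1 - η) * ‖f‖ := by
  have hη0 : 0 ≤ η := (norm_nonneg _).trans ha
  set r := f - S.starProjection f
  set e := g - S.starProjection f
  have heS : e ∈ S := S.sub_mem hg.1 (S.starProjection_apply_mem f)
  have hGalerkin : ⟪a e, e⟫_ℝ = ⟪a r, e⟫_ℝ := by
    rw [← sub_eq_zero, ← inner_sub_left, ← map_sub, sub_sub_sub_cancel_right, map_sub,
      inner_sub_left, hg.2 e heS, sub_self]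
  have herr : ⟪a e, e⟫_ℝ = ⟪(a - 1) r, e⟫_ℝ := by
    rw [sub_apply, one_apply_eq_self, inner_sub_left, S.starProjection_inner_eq_zero f e heS,
      sub_zero, hGalerkin]
  have key : (1 - η) * ‖e‖ * ‖e‖ ≤ η * ‖f‖ * ‖e‖ :=
    calc (1 - η) * ‖e‖ * ‖e‖ ≤ ⟪a e, e⟫_ℝ := mul_norm_mul_norm_le_inner_apply_self ha e
      _ = ⟪(a - 1) r, e⟫_ℝ := herr
      _ ≤ ‖(a - 1) r‖ * ‖e‖ := real_inner_le_norm _ _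
      _ ≤ η * ‖r‖ * ‖e‖ := by gcongr; exact (a - 1).le_of_opNorm_le ha r
      _ ≤ η * ‖f‖ * ‖e‖ := by gcongr; exact norm_sub_starProjection_le_norm S f
  have hlin : (1 - η) * ‖e‖ ≤ η * ‖f‖ := by
    rcases (norm_nonneg e).eq_or_lt with he | he
    · rw [← he, mul_zero]; positivity
    · exact le_of_mul_le_mul_right key he
  rw [div_mul_eq_mul_div, le_div_iff₀ (sub_pos.mpr hη1)]
  linarith

end WeightedProjection

theorem stmt_13_general {H : Type*} [NormedAddCommGroup H] [InnerProductSpace ℝ H]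
    (S : Submodule ℝ H) [CompleteSpace S]
    (a : H →L[ℝ] H) (η : ℝ) (hη1 : η < 1)
    (ha : ‖a - 1‖ ≤ η) :
    ∀ f : H, ∃ g : H,
      (g ∈ S ∧ ∀ s ∈ S, (inner ℝ (a g) s : ℝ) = (inner ℝ (a f) s : ℝ)) ∧
      (∀ g' : H, (g' ∈ S ∧ ∀ s ∈ S, (inner ℝ (a g') s : ℝ) = (inner ℝ (a f) s : ℝ)) → g' = g) ∧
      ‖g - (S.orthogonalProjectionOnto f : H)‖ ≤ 2 * η / (1 - η) * ‖f‖ := by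
  intro f
  have hB := isCoercive_weightedInnerForm ha hη1 S
  obtain ⟨g, hg⟩ := exists_isWeightedProjection hB f
  refine ⟨g, hg, fun g' hg' => hg.unique hB hg', ?_⟩
  have hη0 : 0 ≤ η := (norm_nonneg _).trans ha
  calc ‖g - S.starProjection f‖ ≤ η / (1 - η) * ‖f‖ := hg.norm_sub_starProjection_le ha hη1
    _ ≤ 2 * η / (1 - η) * ‖f‖ := by
      gcongr
      linarith

/-- Comparison of a weighted projection with the orthogonal projection: if `a` is a
bounded self-adjoint positive operator with `‖a - I‖ ≤ η < 1` and `P_a f ∈ S` is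
defined by `⟨a P_a f, s⟩ = ⟨a f, s⟩` for all `s ∈ S`, then `P_a f` exists, is unique,
and `‖P_a f - P f‖ ≤ 2η/(1-η) ‖f‖`. -/
theorem stmt_13 {H : Type*} [NormedAddCommGroup H] [InnerProductSpace ℝ H]
    [CompleteSpace H] (S : Submodule ℝ H) [CompleteSpace S]
    (a : H →L[ℝ] H) (η : ℝ) (hη0 : 0 ≤ η) (hη1 : η < 1)
    (hsym : ∀ u v : H, (inner ℝ (a u) v : ℝ) = (inner ℝ u (a v) : ℝ))
    (hpos : ∀ v : H, 0 ≤ (inner ℝ (a v) v : ℝ))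
    (ha : ‖a - 1‖ ≤ η) :
    ∀ f : H, ∃ g : H,
      (g ∈ S ∧ ∀ s ∈ S, (inner ℝ (a g) s : ℝ) = (inner ℝ (a f) s : ℝ)) ∧
      (∀ g' : H, (g' ∈ S ∧ ∀ s ∈ S, (inner ℝ (a g') s : ℝ) = (inner ℝ (a f) s : ℝ)) → g' = g) ∧
      ‖g - (S.orthogonalProjectionOnto f : H)‖ ≤ 2 * η / (1 - η) * ‖f‖ :=
  stmt_13_general S a η hη1 ha
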